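/- arXiv:1101.3621 — 2 statements merged into one kernel-verified Lean document; each statement's English description precedes it below -/
import Mathlib

section
/- Let l ≥ 3 and let a be an aperiodic Lusztig datum of type A_{l-1}^{(1)} (i.e., a_{i,j} = a_{i+l,j+l} for all i < j, a_{i,j} = 0 for j - i ≥ N_a, and for each (i,j) at least one of a_{i,j}, a_{i+1,j+1}, …, a_{i+l-1,j+l-1} is 0). Let I = [n+1, n+m] and k = (k_{n+1} < ⋯ < k_{n+u}) ∈ M_I^×. If k_{n+1} - n ≥ (2l+1) N_a, then M_k(a^I) = M_{k'}(a^{I'}) for all d > 0, where I' = [n-d+1, n+m] and k' = [n-d+1, n] ∪ k. -/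
/-- Restriction `a^J` of a Lusztig datum to the interval `J̃ = [lo, hi]`:
entries outside `Δ_J^+` are set to `0`. -/
def aRes (lo hi : ℤ) (a : ℤ → ℤ → ℕ) : ℤ → ℤ → ℕ :=
  fun i j => if lo ≤ i ∧ i < j ∧ j ≤ hi then a i j else 0

/-- `C` is a `κ`-tableau of size `u` (indices 0-indexed, `κ` listing
`k_{n+1} < ⋯ < k_{n+u}`): upper-triangular with diagonal `κ`, weakly
increasing along rows and strictly increasing down columns. -/
def IsTab (u : ℕ) (κ : ℕ → ℤ) (C : ℕ → ℕ → ℤ) : Prop :=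
  (∀ p < u, C p p = κ p) ∧
  (∀ p q : ℕ, p ≤ q → q + 1 < u → C p q ≤ C p (q + 1)) ∧
  (∀ p q : ℕ, p + 1 ≤ q → q < u → C p q < C (p + 1) q)

/-- The tableau sum `∑_{p<q} a_{c_{p,q}, c_{p,q}+(q-p)}`. -/
def TabSum (a : ℤ → ℤ → ℕ) (u : ℕ) (C : ℕ → ℕ → ℤ) : ℤ :=
  ∑ p ∈ Finset.range u, ∑ q ∈ Finset.range u,
    if p < q then (a (C p q) (C p q + (q : ℤ) - (p : ℤ)) : ℤ) else 0

/-- Formula (2.4.1):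
`M_k(a) = -∑_{j} ∑_{i=n+1}^{k_j - 1} a_{i,k_j} + min { tableau sums }`,
for the interval with left endpoint `n+1` and `k` enumerated by `κ` (size `u`). -/
noncomputable def Mval (a : ℤ → ℤ → ℕ) (n : ℤ) (u : ℕ) (κ : ℕ → ℤ) : ℤ :=
  -(∑ j ∈ Finset.range u, ∑ i ∈ Finset.Ico (n + 1) (κ j), (a i (κ j) : ℤ))
    + sInf {S : ℤ | ∃ C : ℕ → ℕ → ℤ, IsTab u κ C ∧ S = TabSum a u C}

-- reindexing lemma
lemma sum_Ico_int (c : ℤ) (t : ℕ) (f : ℤ → ℤ) :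
    ∑ i ∈ Finset.Ico c (c + (t : ℤ)), f i = ∑ p ∈ Finset.range t, f (c + (p : ℤ)) := by
  induction t with
  | zero => simp
  | succ t ih =>
      have h1 : Finset.Ico c (c + ((t+1:ℕ) : ℤ)) = insert (c + (t:ℤ)) (Finset.Ico c (c + (t:ℤ))) := by
        ext x; simp; omega
      rw [h1, Finset.sum_insert (by simp), ih, Finset.sum_range_succ]
      ring

-- tableau row lemma: entries ≥ diagonal
lemma tab_row {u : ℕ} {κ : ℕ → ℤ} {C : ℕ → ℕ → ℤ} (h : IsTab u κ C) :
    ∀ p q, p ≤ q → q < u → κ p ≤ C p q := by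
  obtain ⟨hdiag, hrow, hcol⟩ := h
  intro p q hpq hq
  induction q with
  | zero =>
      have : p = 0 := by omega
      subst this; rw [hdiag 0 hq]
  | succ q ih =>
      rcases Nat.lt_or_ge p (q+1) with h1 | h1
      · have hp : p ≤ q := by omega
        calc κ p ≤ C p q := ih hp (by omega)
          _ ≤ C p (q+1) := hrow p q hp hq
      · have : p = q + 1 := by omega
        subst this; rw [hdiag (q+1) hq]

-- tableau column lemma: C p q + (q-p) ≤ κ q
lemma tab_col {u : ℕ} {κ : ℕ → ℤ} {C : ℕ → ℕ → ℤ} (h : IsTab u κ C) :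
    ∀ j q, j ≤ q → q < u → C (q - j) q + (j : ℤ) ≤ κ q := by
  obtain ⟨hdiag, hrow, hcol⟩ := h
  intro j q hjq hq
  induction j with
  | zero => simp [hdiag q hq]
  | succ j ih =>
      have h1 : (q - (j+1)) + 1 = q - j := by omega
      have h2 : C (q - (j+1)) q < C (q - j) q := by
        have := hcol (q - (j+1)) q (by omega) hq
        rwa [h1] at this
      have := ih (by omega)
      push_cast
      linarith

-- the forced corner: if κ has consecutive values on [0,d), entries are forced
lemma tab_corner {u : ℕ} {κ : ℕ → ℤ} {C : ℕ → ℕ → ℤ} (h : IsTab u κ C)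
    {p q : ℕ} (hpq : p ≤ q) (hq : q < u) (hcons : κ q = κ p + (q - p : ℕ)) :
    C p q = κ p := by
  have h1 := tab_row h p q hpq hq
  have h2 := tab_col h (q - p) q (by omega) hq
  have h3 : q - (q - p) = p := by omega
  rw [h3] at h2
  have : ((q - p : ℕ) : ℤ) = (q : ℤ) - p := by omega
  omega
section Zf
variable (a : ℤ → ℤ → ℕ) (l : ℕ)
  (hap : ∀ i j : ℤ, i < j → ∃ s : ℕ, s < l ∧ a (i + (s : ℤ)) (j + (s : ℤ)) = 0)
  (N : ℕ) (b : ℤ)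

/-- one aperiodicity step: move `i` right by `< l` so that `a _ (_ + δ + 1) = 0`. -/
noncomputable def zstep (i : ℤ) (δ : ℕ) : ℤ :=
  i + ((hap i (i + (δ : ℤ) + 1) (by omega)).choose : ℤ)

lemma zstep_ge (i : ℤ) (δ : ℕ) : i ≤ zstep a l hap i δ := by
  have : (0:ℤ) ≤ ((hap i (i + (δ : ℤ) + 1) (by omega)).choose : ℤ) := Int.ofNat_nonneg _
  unfold zstep; omega

lemma zstep_lt (i : ℤ) (δ : ℕ) : zstep a l hap i δ < i + l := by
  have h := (hap i (i + (δ : ℤ) + 1) (by omega)).choose_spec.1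
  unfold zstep; omega

lemma zstep_mem (i : ℤ) (δ : ℕ) :
    a (zstep a l hap i δ) (zstep a l hap i δ + (δ : ℤ) + 1) = 0 := by
  have h := (hap i (i + (δ : ℤ) + 1) (by omega)).choose_spec.2
  unfold zstep
  convert h using 2
  ring

/-- `zf δ`: a weakly increasing sequence with `a (zf δ) (zf δ + δ) = 0` for `1 ≤ δ < N`. -/
noncomputable def zf : ℕ → ℤ
  | 0 => b
  | (δ+1) => if δ + 1 < N then zstep a l hap (zf δ) δ else zf δ

lemma zf_mono_step (δ : ℕ) : zf a l hap N b δ ≤ zf a l hap N b (δ+1) := by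
  rw [zf]; split
  · exact zstep_ge a l hap _ δ
  · exact le_refl _

lemma zf_mono : Monotone (zf a l hap N b) :=
  monotone_nat_of_le_succ (zf_mono_step a l hap N b)

lemma zf_step_lt (δ : ℕ) : zf a l hap N b (δ+1) < zf a l hap N b δ + l ∨
    (zf a l hap N b (δ+1) = zf a l hap N b δ) := by
  rw [zf]; split
  · exact Or.inl (zstep_lt a l hap _ δ)
  · exact Or.inr rfl

lemma zf_ge (δ : ℕ) : b ≤ zf a l hap N b δ := by
  have := zf_mono a l hap N b (Nat.zero_le δ)
  simpa [zf] using this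

lemma zf_mem (δ : ℕ) (h1 : δ + 1 < N) :
    a (zf a l hap N b (δ+1)) (zf a l hap N b (δ+1) + ((δ:ℤ)+1)) = 0 := by
  have hz : zf a l hap N b (δ+1) = zstep a l hap (zf a l hap N b δ) δ := by
    rw [zf, if_pos h1]
  rw [hz]
  have := zstep_mem a l hap (zf a l hap N b δ) δ
  convert this using 2
  ring

lemma zf_bound (hl : 1 ≤ l) (δ : ℕ) :
    zf a l hap N b δ ≤ b + (min δ (N-1) : ℕ) * ((l:ℤ) - 1) := by
  induction δ with
  | zero => simp [zf]
  | succ δ ih =>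
      rw [zf]; split
      · rename_i h
        have h2 := zstep_lt a l hap (zf a l hap N b δ) δ
        have h3 : min δ (N-1) = δ := by omega
        have h4 : min (δ+1) (N-1) = δ + 1 := by omega
        rw [h3] at ih; rw [h4]
        push_cast
        push_cast at ih
        nlinarith [ih, h2]
      · have : ((min δ (N-1) : ℕ) : ℤ) ≤ ((min (δ+1) (N-1) : ℕ) : ℤ) := by
          have : min δ (N-1) ≤ min (δ+1) (N-1) := by omega
          exact_mod_cast this
        nlinarith [ih, this]

lemma zf_bound' (hl : 1 ≤ l) (hN : 1 ≤ N) (δ : ℕ) :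
    zf a l hap N b δ ≤ b + ((N:ℤ)-1) * ((l:ℤ) - 1) := by
  have h := zf_bound a l hap N b hl δ
  have h2 : ((min δ (N-1) : ℕ) : ℤ) ≤ (N:ℤ) - 1 := by
    have : min δ (N-1) ≤ N - 1 := min_le_right _ _
    omega
  nlinarith [h, h2, hl]

end Zf

-- periodicity for multiples
lemma hper_mul (a : ℤ → ℤ → ℕ) (l : ℕ)
    (hper : ∀ i j : ℤ, a (i + (l : ℤ)) (j + (l : ℤ)) = a i j)
    (t : ℕ) (i j : ℤ) : a (i + (l:ℤ) * t) (j + (l:ℤ) * t) = a i j := by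
  induction t with
  | zero => simp
  | succ t ih =>
      have := hper (i + (l:ℤ) * t) (j + (l:ℤ) * t)
      rw [ih] at this
      convert this using 2 <;> push_cast <;> ring

-- aRes vanishing
lemma aRes_zero {a : ℤ → ℤ → ℕ} {i j : ℤ} (lo hi : ℤ) (h : a i j = 0) :
    aRes lo hi a i j = 0 := by
  unfold aRes; split <;> simp [h]
-- extra helper lemmas
lemma tabsum_nonneg (A : ℤ → ℤ → ℕ) (u : ℕ) (C : ℕ → ℕ → ℤ) : 0 ≤ TabSum A u C := by
  refine Finset.sum_nonneg fun p _ => Finset.sum_nonneg fun q _ => ?_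
  split <;> positivity

lemma sum_range_ite_lt (dd q : ℕ) (hq : q ≤ dd) (f : ℕ → ℤ) :
    ∑ p ∈ Finset.range dd, (if p < q then f p else 0) = ∑ p ∈ Finset.range q, f p := by
  rw [← Finset.sum_filter]
  congr 1
  ext p; simp; omega

lemma double_sum_split (d u : ℕ) (f : ℕ → ℕ → ℤ) :
    ∑ p ∈ Finset.range (d+u), ∑ q ∈ Finset.range (d+u), f p q
      = ((∑ p ∈ Finset.range d, ∑ q ∈ Finset.range d, f p q)
        + (∑ p ∈ Finset.range d, ∑ j ∈ Finset.range u, f p (d+j)))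
        + ((∑ i ∈ Finset.range u, ∑ q ∈ Finset.range d, f (d+i) q)
        + (∑ i ∈ Finset.range u, ∑ j ∈ Finset.range u, f (d+i) (d+j))) := by
  calc ∑ p ∈ Finset.range (d+u), ∑ q ∈ Finset.range (d+u), f p q
      = ∑ p ∈ Finset.range (d+u),
          ((∑ q ∈ Finset.range d, f p q) + ∑ j ∈ Finset.range u, f p (d+j)) :=
        Finset.sum_congr rfl (fun p _ => Finset.sum_range_add _ d u)
    _ = _ := by
        rw [Finset.sum_add_distrib, Finset.sum_range_add, Finset.sum_range_add]
        ring

/-- Lemma 6.1.3: let `l ≥ 3` and `a` an aperiodic Lusztig datum of type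
`A_{l-1}^{(1)}` with bound `N`. If `k_{n+1} - n ≥ (2l+1)N`, then
`M_k(a^I) = M_{k'}(a^{I'})` for all `d > 0`, where `I' = [n-d+1, n+m]` and
`k' = [n-d+1, n] ∪ k`. -/
theorem stmt12 (l : ℕ) (hl : 3 ≤ l) (a : ℤ → ℤ → ℕ) (N : ℕ) (hN : 0 < N)
    (ha : ∀ i j : ℤ, (N : ℤ) ≤ j - i → a i j = 0)
    (hper : ∀ i j : ℤ, a (i + (l : ℤ)) (j + (l : ℤ)) = a i j)
    (hap : ∀ i j : ℤ, i < j → ∃ s : ℕ, s < l ∧ a (i + (s : ℤ)) (j + (s : ℤ)) = 0)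
    (n : ℤ) (m u : ℕ) (hu1 : 1 ≤ u) (hum : u ≤ m)
    (κ : ℕ → ℤ)
    (hmono : ∀ s t : ℕ, s < t → t < u → κ s < κ t)
    (hrange : ∀ t < u, n + 1 ≤ κ t ∧ κ t ≤ n + (m : ℤ) + 1)
    (hgap : ((2 * l + 1 : ℕ) : ℤ) * (N : ℤ) ≤ κ 0 - n)
    (d : ℕ) (hd : 0 < d) :
    Mval (aRes (n + 1) (n + (m : ℤ) + 1) a) n u κ =
      Mval (aRes (n - (d : ℤ) + 1) (n + (m : ℤ) + 1) a) (n - (d : ℤ)) (u + d)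
        (fun t => if t < d then n - (d : ℤ) + 1 + (t : ℤ) else κ (t - d)) := by
  classical
  have hl1 : 1 ≤ l := by omega
  set A1 : ℤ → ℤ → ℕ := aRes (n + 1) (n + (m:ℤ) + 1) a with hA1
  set A2 : ℤ → ℤ → ℕ := aRes (n - (d:ℤ) + 1) (n + (m:ℤ) + 1) a with hA2
  set κ2 : ℕ → ℤ := fun t => if t < d then n - (d:ℤ) + 1 + (t:ℤ) else κ (t - d) with hκ2
  -- basic facts about κ
  have hκ0 : n + ((2*(l:ℤ)+1)) * (N:ℤ) ≤ κ 0 := by push_cast at hgap; linarith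
  have hκlb : ∀ t < u, κ 0 ≤ κ t := by
    intro t ht
    rcases Nat.eq_zero_or_pos t with h | h
    · subst h; exact le_refl _
    · exact le_of_lt (hmono 0 t h ht)
  have hκn1 : ∀ t < u, n + 1 ≤ κ t := fun t ht => (hrange t ht).1
  have hAeq : ∀ x y : ℤ, n + 1 ≤ x → A2 x y = A1 x y := by
    intro x y hx
    rw [hA1, hA2]
    unfold aRes
    split_ifs with h1 h2 <;> first | rfl | (exfalso; omega)
  -- the zero-selector sequence
  set b : ℤ := n + (N:ℤ) + 1 with hb
  set z : ℕ → ℤ := zf a l hap N b with hz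
  have hzlb : ∀ δ, b ≤ z δ := fun δ => zf_ge a l hap N b δ
  have hzub : ∀ δ, z δ ≤ b + ((N:ℤ)-1) * ((l:ℤ)-1) := fun δ => zf_bound' a l hap N b hl1 hN δ
  have hzmono : ∀ δ δ', δ ≤ δ' → z δ ≤ z δ' := fun _ _ h => zf_mono a l hap N b h
  have hzstep : ∀ δ, z (δ+1) < z δ + l := by
    intro δ
    rcases zf_step_lt a l hap N b δ with h | h
    · exact h
    · show zf a l hap N b (δ+1) < zf a l hap N b δ + (l:ℤ)
      omega
  have hzmem : ∀ δ : ℕ, 1 ≤ δ → a (z δ) (z δ + (δ:ℤ)) = 0 := by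
    intro δ hδ
    by_cases hδN : δ < N
    · obtain ⟨δ', rfl⟩ : ∃ δ', δ = δ' + 1 := ⟨δ - 1, by omega⟩
      have := zf_mem a l hap N b δ' hδN
      rw [hz]
      convert this using 3 <;> push_cast <;> ring
    · exact ha _ _ (by omega)
  -- the shift constant D
  set D : ℤ := ∑ p ∈ Finset.range d, ∑ q ∈ Finset.range d,
      (if p < q then (A2 (n - (d:ℤ) + 1 + (p:ℤ)) (n - (d:ℤ) + 1 + (p:ℤ) + (q:ℤ) - (p:ℤ)) : ℤ) else 0)
    with hD
  -- part 1 : the linear sums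
  have hsum : (∑ j ∈ Finset.range (u+d), ∑ i ∈ Finset.Ico ((n-(d:ℤ)) + 1) (κ2 j), (A2 i (κ2 j) : ℤ))
      = (∑ j ∈ Finset.range u, ∑ i ∈ Finset.Ico (n + 1) (κ j), (A1 i (κ j) : ℤ)) + D := by
    have hNle : (N:ℤ) ≤ (2*(l:ℤ)+1) * (N:ℤ) := by nlinarith [Int.ofNat_nonneg l, Int.ofNat_nonneg N]
    rw [show u + d = d + u from by omega, Finset.sum_range_add]
    have hpart1 : (∑ j ∈ Finset.range d, ∑ i ∈ Finset.Ico ((n-(d:ℤ)) + 1) (κ2 j), (A2 i (κ2 j) : ℤ)) = D := by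
      rw [hD, Finset.sum_comm]
      refine Finset.sum_congr rfl fun j hj => ?_
      rw [Finset.mem_range] at hj
      have hκ2j : κ2 j = (n - (d:ℤ) + 1) + (j:ℤ) := by
        simp only [hκ2]; rw [if_pos hj]
      rw [hκ2j, sum_Ico_int, sum_range_ite_lt d j hj.le]
      refine Finset.sum_congr rfl fun p hp => ?_
      congr 2
      ring
    have hpart2 : (∑ j ∈ Finset.range u, ∑ i ∈ Finset.Ico ((n-(d:ℤ)) + 1) (κ2 (d+j)), (A2 i (κ2 (d+j)) : ℤ))
        = ∑ j ∈ Finset.range u, ∑ i ∈ Finset.Ico (n + 1) (κ j), (A1 i (κ j) : ℤ) := by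
      refine Finset.sum_congr rfl fun j hj => ?_
      rw [Finset.mem_range] at hj
      have hκ2j : κ2 (d+j) = κ j := by
        simp only [hκ2]; rw [if_neg (by omega), Nat.add_sub_cancel_left]
      rw [hκ2j]
      rw [← Finset.Ico_union_Ico_eq_Ico (show n - (d:ℤ) + 1 ≤ n+1 by omega)
            (show n+1 ≤ κ j from hκn1 j hj),
          Finset.sum_union (by
            simp only [Finset.disjoint_left, Finset.mem_Ico]
            intro x hx1 hx2
            omega)]
      have h0 : (∑ i ∈ Finset.Ico (n - (d:ℤ) + 1) (n+1), (A2 i (κ j) : ℤ)) = 0 := by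
        refine Finset.sum_eq_zero fun i hi => ?_
        rw [Finset.mem_Ico] at hi
        have hzero : a i (κ j) = 0 := by
          apply ha
          have := hκlb j hj
          omega
        rw [hA2, aRes_zero _ _ hzero]
        simp
      rw [h0, zero_add]
      refine Finset.sum_congr rfl fun i hi => ?_
      rw [Finset.mem_Ico] at hi
      rw [hAeq i (κ j) hi.1]
    rw [hpart1, hpart2]
    ring
  -- tableau sets
  set T1 : Set ℤ := {S : ℤ | ∃ C : ℕ → ℕ → ℤ, IsTab u κ C ∧ S = TabSum A1 u C} with hT1
  set T2 : Set ℤ := {S : ℤ | ∃ C : ℕ → ℕ → ℤ, IsTab (u+d) κ2 C ∧ S = TabSum A2 (u+d) C} with hT2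
  have hext : ∀ S ∈ T1, S + D ∈ T2 := by
    rintro S ⟨C, hC, rfl⟩
    set C' : ℕ → ℕ → ℤ := fun p q =>
      if q < d then n - (d:ℤ) + 1 + (p:ℤ)
      else if p + N ≤ d then n - (d:ℤ) + 1 + (p:ℤ)
      else if p < d then z (q - p) + (l:ℤ) * ((p + N - d : ℕ) : ℤ)
      else C (p - d) (q - d) with hC'
    have e1 : ∀ p q : ℕ, q < d → C' p q = n - (d:ℤ) + 1 + (p:ℤ) := by
      intro p q h; simp only [hC']; rw [if_pos h]
    have e2 : ∀ p q : ℕ, d ≤ q → p + N ≤ d → C' p q = n - (d:ℤ) + 1 + (p:ℤ) := by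
      intro p q h1 h2; simp only [hC']; rw [if_neg (by omega), if_pos h2]
    have e3 : ∀ p q : ℕ, d ≤ q → d < p + N → p < d →
        C' p q = z (q - p) + (l:ℤ) * ((p + N - d : ℕ) : ℤ) := by
      intro p q h1 h2 h3; simp only [hC']
      rw [if_neg (by omega), if_neg (by omega), if_pos h3]
    have e4 : ∀ p q : ℕ, d ≤ q → d ≤ p → C' p q = C (p - d) (q - d) := by
      intro p q h1 h2; simp only [hC']
      rw [if_neg (by omega), if_neg (by omega), if_neg (by omega)]
    have hN1 : (1:ℤ) ≤ (N:ℤ) := by exact_mod_cast hN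
    have hl3 : (3:ℤ) ≤ (l:ℤ) := by exact_mod_cast hl
    have hzcap : ∀ δ, z δ + (l:ℤ) * ((N:ℤ) - 1) < κ 0 := by
      intro δ
      have h1 := hzub δ
      nlinarith [hκ0]
    have htab : IsTab (u+d) κ2 C' := by
      obtain ⟨h1, h2, h3⟩ := hC
      refine ⟨?_, ?_, ?_⟩
      · intro p hp
        by_cases hpd : p < d
        · rw [e1 p p hpd]; simp only [hκ2]; rw [if_pos hpd]
        · rw [e4 p p (by omega) (by omega), h1 (p-d) (by omega)]
          simp only [hκ2]; rw [if_neg hpd]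
      · intro p q hpq hq1
        by_cases hq1d : q + 1 < d
        · rw [e1 p q (by omega), e1 p (q+1) hq1d]
        · by_cases hqd : q < d
          · rw [e1 p q hqd]
            by_cases hup : p + N ≤ d
            · rw [e2 p (q+1) (by omega) hup]
            · rw [e3 p (q+1) (by omega) (by omega) (by omega)]
              have hzl := hzlb ((q+1) - p)
              have hof : (0:ℤ) ≤ (l:ℤ) * (((p + N - d : ℕ)) : ℤ) := by positivity
              have hpd' : (p:ℤ) < (d:ℤ) := by exact_mod_cast (show p < d by omega)
              rw [hb] at hzl
              linarith
          · by_cases hup : p + N ≤ d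
            · rw [e2 p q (by omega) hup, e2 p (q+1) (by omega) hup]
            · by_cases hpd : p < d
              · rw [e3 p q (by omega) (by omega) hpd, e3 p (q+1) (by omega) (by omega) hpd]
                have := hzmono (q - p) (q + 1 - p) (by omega)
                linarith
              · rw [e4 p q (by omega) (by omega), e4 p (q+1) (by omega) (by omega)]
                have hqq : q + 1 - d = (q - d) + 1 := by omega
                rw [hqq]
                exact h2 (p-d) (q-d) (by omega) (by omega)
      · intro p q hpq hq
        by_cases hqd : q < d
        · rw [e1 p q hqd, e1 (p+1) q hqd]; push_cast; omega
        · by_cases hup1 : p + 1 + N ≤ d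
          · rw [e2 p q (by omega) (by omega), e2 (p+1) q (by omega) hup1]
            push_cast; omega
          · by_cases hup : p + N ≤ d
            · by_cases hp1d : p + 1 < d
              · rw [e2 p q (by omega) hup, e3 (p+1) q (by omega) (by omega) hp1d]
                have hzl := hzlb (q - (p+1))
                have hof : (0:ℤ) ≤ (l:ℤ) * ((((p+1) + N - d : ℕ)) : ℤ) := by positivity
                have hcst : (p:ℤ) + (N:ℤ) ≤ (d:ℤ) := by exact_mod_cast hup
                rw [hb] at hzl
                linarith
              · have hp1 : p + 1 = d := by omega
                rw [e2 p q (by omega) hup, e4 (p+1) q (by omega) (by omega)]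
                have hrow0 : κ ((p+1) - d) ≤ C ((p+1)-d) (q-d) :=
                  tab_row ⟨h1, h2, h3⟩ _ _ (by omega) (by omega)
                have hn1 : n + 1 ≤ κ ((p+1)-d) := hκn1 _ (by omega)
                have hcst : (p:ℤ) + (N:ℤ) ≤ (d:ℤ) := by exact_mod_cast hup
                linarith
            · by_cases hpd : p < d
              · by_cases hp1d : p + 1 < d
                · rw [e3 p q (by omega) (by omega) hpd,
                      e3 (p+1) q (by omega) (by omega) hp1d]
                  have hstep := hzstep (q - (p+1))
                  have hq1 : q - p = (q - (p+1)) + 1 := by omega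
                  rw [hq1]
                  have hof : ((((p+1) + N - d : ℕ)) : ℤ) = (((p + N - d : ℕ)) : ℤ) + 1 := by
                    omega
                  rw [hof]
                  have hr : (l:ℤ) * ((((p + N - d : ℕ)) : ℤ) + 1)
                      = (l:ℤ) * (((p + N - d : ℕ)) : ℤ) + (l:ℤ) := by ring
                  rw [hr]
                  linarith
                · have hp1 : p + 1 = d := by omega
                  rw [e3 p q (by omega) (by omega) hpd, e4 (p+1) q (by omega) (by omega)]
                  have hrow0 : κ ((p+1) - d) ≤ C ((p+1)-d) (q-d) :=
                    tab_row ⟨h1, h2, h3⟩ _ _ (by omega) (by omega)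
                  have h0 : (p+1) - d = 0 := by omega
                  rw [h0] at hrow0
                  have hcap := hzcap (q - p)
                  have hof : (((p + N - d : ℕ)) : ℤ) = (N:ℤ) - 1 := by omega
                  rw [hof, h0]
                  linarith [hκlb 0 (by omega : 0 < u)]
              · rw [e4 p q (by omega) (by omega), e4 (p+1) q (by omega) (by omega)]
                have hpp : (p+1) - d = (p - d) + 1 := by omega
                rw [hpp]
                exact h3 (p-d) (q-d) (by omega) (by omega)
    refine ⟨C', htab, ?_⟩
    have hTS : TabSum A2 (u+d) C' = (D + 0) + (0 + TabSum A1 u C) := by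
      rw [TabSum, show u + d = d + u from by omega, double_sum_split]
      congr 1
      · congr 1
        · -- corner = D
          rw [hD]
          refine Finset.sum_congr rfl fun p hp => Finset.sum_congr rfl fun q hq => ?_
          rw [Finset.mem_range] at hp hq
          by_cases hpq : p < q
          · rw [if_pos hpq, if_pos hpq, e1 p q hq]
          · rw [if_neg hpq, if_neg hpq]
        · -- mixed = 0
          refine Finset.sum_eq_zero fun p hp => Finset.sum_eq_zero fun j hj => ?_
          rw [Finset.mem_range] at hp hj
          rw [if_pos (by omega)]
          by_cases hup : p + N ≤ d
          · rw [e2 p (d+j) (by omega) hup]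
            have hz0 : a (n - (d:ℤ) + 1 + (p:ℤ))
                (n - (d:ℤ) + 1 + (p:ℤ) + ((d+j:ℕ):ℤ) - (p:ℤ)) = 0 := by
              apply ha; push_cast; omega
            rw [hA2, aRes_zero _ _ hz0]
            simp
          · rw [e3 p (d+j) (by omega) (by omega) (by omega)]
            have hz0 : a (z ((d+j) - p) + (l:ℤ) * (((p + N - d : ℕ)):ℤ))
                (z ((d+j) - p) + (l:ℤ) * (((p + N - d : ℕ)):ℤ) + ((d+j:ℕ):ℤ) - (p:ℤ)) = 0 := by
              have hδ : (((d+j) - p : ℕ):ℤ) = ((d+j:ℕ):ℤ) - (p:ℤ) := by omega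
              have harg : z ((d+j) - p) + (l:ℤ) * (((p + N - d : ℕ)):ℤ) + ((d+j:ℕ):ℤ) - (p:ℤ)
                  = (z ((d+j) - p) + (((d+j) - p : ℕ):ℤ)) + (l:ℤ) * (((p + N - d : ℕ)):ℤ) := by
                rw [hδ]; ring
              rw [harg]
              have hpm := hper_mul a l hper (p + N - d) (z ((d+j) - p))
                (z ((d+j) - p) + (((d+j) - p : ℕ):ℤ))
              rw [hpm]
              exact hzmem ((d+j) - p) (by omega)
            rw [hA2, aRes_zero _ _ hz0]
            simp
      · congr 1
        · -- b21 = 0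
          refine Finset.sum_eq_zero fun i _ => Finset.sum_eq_zero fun q hq => ?_
          rw [Finset.mem_range] at hq
          rw [if_neg (by omega)]
        · -- b22 = TabSum A1 u C
          rw [TabSum]
          refine Finset.sum_congr rfl fun i hi => Finset.sum_congr rfl fun j hj => ?_
          rw [Finset.mem_range] at hi hj
          by_cases hij : i < j
          · rw [if_pos (by omega), if_pos hij, e4 (d+i) (d+j) (by omega) (by omega)]
            simp only [Nat.add_sub_cancel_left]
            have hge : n + 1 ≤ C i j :=
              le_trans (hκn1 i hi) (tab_row hC i j (le_of_lt hij) hj)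
            have harg : C i j + ((d+j:ℕ):ℤ) - ((d+i:ℕ):ℤ) = C i j + (j:ℤ) - (i:ℤ) := by
              push_cast; ring
            rw [harg, hAeq _ _ hge]
          · rw [if_neg (by omega), if_neg hij]
    rw [hTS]
    ring
  have hres : ∀ T ∈ T2, ∃ S ∈ T1, S + D ≤ T := by
    rintro T ⟨C', hC', rfl⟩
    have hCtab : IsTab u κ (fun p q => C' (d+p) (d+q)) := by
      obtain ⟨h1, h2, h3⟩ := hC'
      refine ⟨?_, ?_, ?_⟩
      · intro p hp
        have hh := h1 (d+p) (by omega)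
        simp only [hκ2] at hh
        rw [if_neg (by omega), Nat.add_sub_cancel_left] at hh
        exact hh
      · intro p q hpq hq1
        exact h2 (d+p) (d+q) (by omega) (by omega)
      · intro p q hpq hq
        exact h3 (d+p) (d+q) (by omega) (by omega)
    refine ⟨TabSum A1 u (fun p q => C' (d+p) (d+q)), ⟨_, hCtab, rfl⟩, ?_⟩
    have hTS : TabSum A2 (u+d) C'
        = ((∑ p ∈ Finset.range d, ∑ q ∈ Finset.range d,
              (if p < q then (A2 (C' p q) (C' p q + (q:ℤ) - (p:ℤ)) : ℤ) else 0))
          + (∑ p ∈ Finset.range d, ∑ j ∈ Finset.range u,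
              (if p < d+j then (A2 (C' p (d+j)) (C' p (d+j) + ((d+j:ℕ):ℤ) - (p:ℤ)) : ℤ) else 0)))
          + ((∑ i ∈ Finset.range u, ∑ q ∈ Finset.range d,
              (if d+i < q then (A2 (C' (d+i) q) (C' (d+i) q + (q:ℤ) - ((d+i:ℕ):ℤ)) : ℤ) else 0))
          + (∑ i ∈ Finset.range u, ∑ j ∈ Finset.range u,
              (if d+i < d+j then (A2 (C' (d+i) (d+j)) (C' (d+i) (d+j) + ((d+j:ℕ):ℤ) - ((d+i:ℕ):ℤ)) : ℤ) else 0))) := by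
      rw [TabSum, show u + d = d + u from by omega]
      exact double_sum_split d u _
    have hcorner : (∑ p ∈ Finset.range d, ∑ q ∈ Finset.range d,
        (if p < q then (A2 (C' p q) (C' p q + (q:ℤ) - (p:ℤ)) : ℤ) else 0)) = D := by
      rw [hD]
      refine Finset.sum_congr rfl fun p hp => Finset.sum_congr rfl fun q hq => ?_
      rw [Finset.mem_range] at hp hq
      by_cases hpq : p < q
      · rw [if_pos hpq, if_pos hpq]
        have hcons : κ2 q = κ2 p + ((q - p : ℕ) : ℤ) := by
          simp only [hκ2]; rw [if_pos hq, if_pos hp]; omega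
        have hforced : C' p q = κ2 p := tab_corner hC' (le_of_lt hpq) (by omega) hcons
        have hκ2p : κ2 p = n - (d:ℤ) + 1 + (p:ℤ) := by simp only [hκ2]; rw [if_pos hp]
        rw [hforced, hκ2p]
      · rw [if_neg hpq, if_neg hpq]
    have hmixed : 0 ≤ ∑ p ∈ Finset.range d, ∑ j ∈ Finset.range u,
        (if p < d+j then (A2 (C' p (d+j)) (C' p (d+j) + ((d+j:ℕ):ℤ) - (p:ℤ)) : ℤ) else 0) := by
      refine Finset.sum_nonneg fun p _ => Finset.sum_nonneg fun j _ => ?_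
      split <;> positivity
    have hb21 : (∑ i ∈ Finset.range u, ∑ q ∈ Finset.range d,
        (if d+i < q then (A2 (C' (d+i) q) (C' (d+i) q + (q:ℤ) - ((d+i:ℕ):ℤ)) : ℤ) else 0)) = 0 := by
      refine Finset.sum_eq_zero fun i _ => Finset.sum_eq_zero fun q hq => ?_
      rw [Finset.mem_range] at hq
      rw [if_neg (by omega)]
    have hb22 : (∑ i ∈ Finset.range u, ∑ j ∈ Finset.range u,
        (if d+i < d+j then (A2 (C' (d+i) (d+j)) (C' (d+i) (d+j) + ((d+j:ℕ):ℤ) - ((d+i:ℕ):ℤ)) : ℤ) else 0))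
        = TabSum A1 u (fun p q => C' (d+p) (d+q)) := by
      rw [TabSum]
      refine Finset.sum_congr rfl fun i hi => Finset.sum_congr rfl fun j hj => ?_
      rw [Finset.mem_range] at hi hj
      by_cases hij : i < j
      · rw [if_pos (by omega), if_pos hij]
        have hge : n + 1 ≤ C' (d+i) (d+j) := by
          have h1 := tab_row hC' (d+i) (d+j) (by omega) (by omega)
          have h2 : κ2 (d+i) = κ i := by
            simp only [hκ2]; rw [if_neg (by omega), Nat.add_sub_cancel_left]
          rw [h2] at h1
          exact le_trans (hκn1 i hi) h1
        have harg : C' (d+i) (d+j) + ((d+j:ℕ):ℤ) - ((d+i:ℕ):ℤ)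
            = C' (d+i) (d+j) + (j:ℤ) - (i:ℤ) := by push_cast; ring
        rw [harg, hAeq _ _ hge]
      · rw [if_neg (by omega), if_neg hij]
    rw [hTS, hcorner, hb21, hb22]
    linarith [hmixed]
  have hne1 : T1.Nonempty := by
    refine ⟨TabSum A1 u (fun p _ => κ p), fun p _ => κ p, ⟨?_, ?_, ?_⟩, rfl⟩
    · intro p _; rfl
    · intro p q _ _; exact le_refl _
    · intro p q hpq hq; exact hmono p (p+1) (Nat.lt_succ_self p) (by omega)
  have hbd1 : BddBelow T1 := by
    refine ⟨0, fun S hS => ?_⟩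
    obtain ⟨C, _, rfl⟩ := hS
    exact tabsum_nonneg _ _ _
  have hbd2 : BddBelow T2 := by
    refine ⟨0, fun S hS => ?_⟩
    obtain ⟨C, _, rfl⟩ := hS
    exact tabsum_nonneg _ _ _
  have hne2 : T2.Nonempty := ⟨_, hext _ hne1.choose_spec⟩
  have hmem1 : sInf T1 ∈ T1 := Int.csInf_mem hne1 hbd1
  have hmem2 : sInf T2 ∈ T2 := Int.csInf_mem hne2 hbd2
  have hinf : sInf T2 = sInf T1 + D := by
    refine le_antisymm (csInf_le hbd2 (hext _ hmem1)) ?_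
    obtain ⟨S, hS, hle⟩ := hres _ hmem2
    have := csInf_le hbd1 hS
    omega
  -- final assembly
  show (-(∑ j ∈ Finset.range u, ∑ i ∈ Finset.Ico (n + 1) (κ j), (A1 i (κ j) : ℤ)) + sInf T1)
      = (-(∑ j ∈ Finset.range (u+d), ∑ i ∈ Finset.Ico ((n-(d:ℤ)) + 1) (κ2 j), (A2 i (κ2 j) : ℤ)) + sInf T2)
  rw [hsum, hinf]
  ring
end

section
/- Let a be an aperiodic Lusztig datum of type A^{(1)}_{l-1} with a ≠ a_0 (the all-zero datum). Then there exists p ∈ {0, 1, …, l-1} with ε_p(a) > 0. Explicitly: letting k_0 be the minimal k ≤ 0 with max{a_{k+s-1, s} : 1 ≤ s ≤ l} > 0 (indices read appropriately), aperiodicity yields p_0 with a_{k_0+p_0-1, p_0} = 0 and a_{k_0+p_0, p_0+1} > 0, and then A^{(p_0)}_{k_0+p_0}(a) = a_{k_0+p_0, p_0+1} > 0, so ε_{p_0}(a) > 0. -/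
/-- `A_k^{(p)}(a) = ∑_{s ≤ k} (a_{s,p+1} - a_{s-1,p})`; since `a_{i,j} = 0`
for `j - i ≥ N`, all terms with `s < p + 1 - N` vanish and the sum equals the
finite sum over `p + 1 - N ≤ s ≤ k`. -/
noncomputable def Acoef (a : ℤ → ℤ → ℕ) (N : ℕ) (p k : ℤ) : ℤ :=
  ∑ s ∈ Finset.Icc (p + 1 - (N : ℤ)) k, ((a s (p + 1) : ℤ) - (a (s - 1) p : ℤ))

/-- `ε_p(a) = max {A_k^{(p)}(a) : k ≤ p}`. -/
noncomputable def epsP (a : ℤ → ℤ → ℕ) (N : ℕ) (p : ℤ) : ℤ :=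
  sSup {A : ℤ | ∃ k : ℤ, k ≤ p ∧ A = Acoef a N p k}

/-- `A_k^{*(p)}(a) = ∑_{t ≥ k+1} (a_{p,t} - a_{p+1,t+1})`; all terms with
`t > p + N` vanish, so the sum equals the finite sum over `k+1 ≤ t ≤ p + N`. -/
noncomputable def AstarCoef (a : ℤ → ℤ → ℕ) (N : ℕ) (p k : ℤ) : ℤ :=
  ∑ t ∈ Finset.Icc (k + 1) (p + (N : ℤ)), ((a p t : ℤ) - (a (p + 1) (t + 1) : ℤ))

/-- `ε_p^*(a) = max {A_k^{*(p)}(a) : k ≥ p}`. -/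
noncomputable def epsStar (a : ℤ → ℤ → ℕ) (N : ℕ) (p : ℤ) : ℤ :=
  sSup {A : ℤ | ∃ k : ℤ, p ≤ k ∧ A = AstarCoef a N p k}

/-! Let `D` be the largest `j - i` with `a i j ≠ 0`. On the diagonal `t ↦ a (t - D) t`,
which is `l`-periodic and by aperiodicity has both zero and nonzero entries, pick `p ∈ [0, l)`
with `a (p - D) p = 0` and `a (p + 1 - D) (p + 1) ≠ 0`. Every term of `A_{p+1-D}^{(p)}(a)`
except the last lies strictly above diagonal `D`, so this coefficient equals
`a (p + 1 - D) (p + 1) > 0`, which bounds `ε_p(a)` from below. -/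

open Function

theorem Int.exists_and_not_succ_of_not_add {P : ℤ → Prop} {x : ℤ} (hx : P x) :
    ∀ n : ℕ, ¬ P (x + n) → ∃ t, P t ∧ ¬ P (t + 1)
  | 0, hn => absurd (by simpa using hx) hn
  | n + 1, hn => by
    by_cases h : P (x + n)
    · exact ⟨x + n, h, by simpa [add_assoc] using hn⟩
    · exact Int.exists_and_not_succ_of_not_add hx n h

theorem Function.Periodic.exists_mem_Ico_and_not_succ {P : ℤ → Prop} {l : ℤ}
    (hP : Periodic P l) (hl : 0 < l) {x y : ℤ} (hx : P x) (hy : ¬ P y) :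
    ∃ p, 0 ≤ p ∧ p < l ∧ P p ∧ ¬ P (p + 1) := by
  have hy' : ¬ P (y + |x - y| * l) := by rwa [← smul_eq_mul, hP.zsmul |x - y| y]
  have hxy' : x ≤ y + |x - y| * l := by nlinarith [le_abs_self (x - y), abs_nonneg (x - y)]
  obtain ⟨t, ht, ht1⟩ := Int.exists_and_not_succ_of_not_add hx (y + |x - y| * l - x).toNat
    (by rwa [Int.toNat_of_nonneg (by omega), add_sub_cancel])
  have hmod : ∀ c, P (t % l + c) = P (t + c) := fun c => by
    rw [← hP.sub_zsmul_eq (x := t + c) (t / l), smul_eq_mul, Int.emod_def]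
    ring_nf
  refine ⟨t % l, Int.emod_nonneg t hl.ne', Int.emod_lt_of_pos t hl, ?_, by rwa [hmod]⟩
  simpa using (hmod 0).mpr (by simpa using ht)

section Lusztig

variable (a : ℤ → ℤ → ℕ) (N : ℕ)

theorem exists_top_diagonal (ha : ∀ i j : ℤ, (N : ℤ) ≤ j - i → a i j = 0)
    (hne : ∃ i j : ℤ, i < j ∧ a i j ≠ 0) :
    ∃ D : ℤ, 0 < D ∧ D < N ∧ (∃ i, a i (i + D) ≠ 0) ∧
      ∀ i j : ℤ, D < j - i → a i j = 0 := by
  obtain ⟨i₀, j₀, hij₀, hne₀⟩ := hne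
  obtain ⟨D, ⟨i, hi⟩, hmax⟩ :=
    Int.exists_greatest_of_bdd (P := fun d => ∃ i : ℤ, a i (i + d) ≠ 0)
      ⟨N, fun d ⟨i, hi⟩ => by_contra fun h => hi (ha i (i + d) (by omega))⟩
      ⟨j₀ - i₀, i₀, by simpa using hne₀⟩
  have hD₀ : j₀ - i₀ ≤ D := hmax _ ⟨i₀, by simpa using hne₀⟩
  refine ⟨D, by omega, ?_, ⟨i, hi⟩, fun i j hij => by_contra fun h => ?_⟩
  · by_contra h
    exact hi (ha i (i + D) (by omega))
  · have := hmax (j - i) ⟨i, by simpa using h⟩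
    omega

theorem bddAbove_Acoef (p : ℤ) :
    BddAbove {A : ℤ | ∃ k : ℤ, k ≤ p ∧ A = Acoef a N p k} := by
  refine ⟨∑ s ∈ Finset.Icc (p + 1 - (N : ℤ)) p, (a s (p + 1) : ℤ), ?_⟩
  rintro A ⟨k, hk, rfl⟩
  calc Acoef a N p k ≤ ∑ s ∈ Finset.Icc (p + 1 - (N : ℤ)) k, (a s (p + 1) : ℤ) :=
        Finset.sum_le_sum fun s _ => by simp
    _ ≤ ∑ s ∈ Finset.Icc (p + 1 - (N : ℤ)) p, (a s (p + 1) : ℤ) :=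
        Finset.sum_le_sum_of_subset_of_nonneg (Finset.Icc_subset_Icc_right hk)
          fun s _ _ => by positivity

theorem Acoef_le_epsP {p k : ℤ} (hk : k ≤ p) : Acoef a N p k ≤ epsP a N p :=
  le_csSup (bddAbove_Acoef a N p) ⟨k, hk, rfl⟩

theorem Acoef_of_top_diagonal {D : ℤ} (hDN : D ≤ N)
    (hvan : ∀ i j : ℤ, D < j - i → a i j = 0) (p : ℤ) :
    Acoef a N p (p + 1 - D) = (a (p + 1 - D) (p + 1) : ℤ) - a (p - D) p := by
  rw [Acoef, Finset.sum_eq_single_of_mem (p + 1 - D) (by simp; omega)]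
  · ring_nf
  · intro s hs hsD
    rw [Finset.mem_Icc] at hs
    rw [hvan s (p + 1) (by omega), hvan (s - 1) p (by omega)]
    simp

end Lusztig

theorem stmt14_general (l : ℕ) (a : ℤ → ℤ → ℕ) (N : ℕ)
    (ha : ∀ i j : ℤ, (N : ℤ) ≤ j - i → a i j = 0)
    (hper : ∀ i j : ℤ, a (i + (l : ℤ)) (j + (l : ℤ)) = a i j)
    (hap : ∀ i j : ℤ, i < j → ∃ s : ℕ, s < l ∧ a (i + (s : ℤ)) (j + (s : ℤ)) = 0)
    (hne : ∃ i j : ℤ, i < j ∧ a i j ≠ 0) :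
    ∃ p : ℤ, 0 ≤ p ∧ p < (l : ℤ) ∧ 0 < epsP a N p := by
  obtain ⟨D, hD, hDN, ⟨i, hi⟩, hvan⟩ := exists_top_diagonal a N ha hne
  obtain ⟨s, hsl, hs⟩ := hap i (i + D) (by omega)
  have hdiag : Periodic (fun t => a (t - D) t = 0) l := fun t => by
    simpa [sub_add_eq_add_sub] using congrArg (· = 0) (hper (t - D) t)
  obtain ⟨p, hp₀, hpl, hzero, hpos⟩ := hdiag.exists_mem_Ico_and_not_succ (by omega)
    (x := i + s + D) (y := i + D) (by rwa [add_sub_cancel_right, add_right_comm])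
    (by simpa using hi)
  refine ⟨p, hp₀, hpl, ?_⟩
  calc 0 < Acoef a N p (p + 1 - D) := by
        rw [Acoef_of_top_diagonal a N hDN.le hvan]
        omega
    _ ≤ epsP a N p := Acoef_le_epsP a N (by omega)

/-- If `a` is an aperiodic Lusztig datum of type `A_{l-1}^{(1)}` which is not
the all-zero datum, then `ε_p(a) > 0` for some `p ∈ {0, 1, …, l-1}`. -/
theorem stmt14 (l : ℕ) (hl : 3 ≤ l) (a : ℤ → ℤ → ℕ) (N : ℕ) (hN : 0 < N)
    (ha : ∀ i j : ℤ, (N : ℤ) ≤ j - i → a i j = 0)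
    (hper : ∀ i j : ℤ, a (i + (l : ℤ)) (j + (l : ℤ)) = a i j)
    (hap : ∀ i j : ℤ, i < j → ∃ s : ℕ, s < l ∧ a (i + (s : ℤ)) (j + (s : ℤ)) = 0)
    (hne : ∃ i j : ℤ, i < j ∧ a i j ≠ 0) :
    ∃ p : ℤ, 0 ≤ p ∧ p < (l : ℤ) ∧ 0 < epsP a N p :=
  stmt14_general l a N ha hper hap hne
end
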